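/- Let n ≥ 1, κ ∈ [0,1], and 1 ≤ j ≤ n. Summing the outcome probabilities ‖A_k W_n‖² over all outcome strings k : Fin n → Fin 2 with exactly j zeros yields the aggregated probability ℘_{0,j} = C(n,j)·(j/n)·κ^{n-j}·(1-κ)^{j-1}. -/

import Mathlib

/-!
`W_n` is supported on the `n` strings `e_i` with a single `1`, each of weight `1/n`, and `A_k`
is diagonal. Since `d(1,1) = 0`, the string `e_i` survives `A_k` only when `k i = 0`, and then
its other coordinates contribute `(1-κ)` for each of the remaining `j - 1` zeros of `k` and `κ`
for each of its `n - j` ones. Hence `‖A_k W_n‖² = (j/n) κ^(n-j) (1-κ)^(j-1)` depends on `k`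
only through its number `j` of zeros, and there are `C(n,j)` such `k`.
-/

open scoped Classical

/-- The `n`-qubit W state: amplitude `1/√n` on strings with exactly one `1`. -/
noncomputable def Wstate (n : ℕ) : (Fin n → Fin 2) → ℂ := fun x =>
  if (Finset.univ.filter fun m => x m = 1).card = 1 then ((1 / Real.sqrt n : ℝ) : ℂ) else 0

/-- Entries of the single-parameter Kraus operators:
`d(0,0)=√(1-κ)`, `d(0,1)=1`, `d(1,0)=√κ`, `d(1,1)=0`. -/
noncomputable def dEntry (κ : ℝ) : Fin 2 → Fin 2 → ℂ := fun a b =>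
  if a = 0 then (if b = 0 then ((Real.sqrt (1 - κ) : ℝ) : ℂ) else 1)
  else (if b = 0 then ((Real.sqrt κ : ℝ) : ℂ) else 0)

/-- The product Kraus operator `A_k` associated with outcome string `k`. -/
noncomputable def krausApply (n : ℕ) (κ : ℝ) (k : Fin n → Fin 2)
    (v : (Fin n → Fin 2) → ℂ) : (Fin n → Fin 2) → ℂ :=
  fun x => (∏ m, dEntry κ (k m) (x m)) * v x

open Finset

lemma Pi.single_left_injective {ι M : Type*} [DecidableEq ι] [Zero M] {b : M} (hb : b ≠ 0) :
    Function.Injective fun i : ι => (Pi.single i b : ι → M) := by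
  intro i i' h
  by_contra hne
  simpa [Pi.single_eq_of_ne hne, hb] using congrFun h i

lemma norm_dEntry_zero_sq {κ : ℝ} (hκ : κ ∈ Set.Icc (0 : ℝ) 1) (a : Fin 2) :
    ‖dEntry κ a 0‖ ^ 2 = if a = 0 then 1 - κ else κ := by
  fin_cases a <;> simp [dEntry, Complex.norm_real, Real.sq_sqrt, hκ.1, sub_nonneg.mpr hκ.2]

lemma norm_dEntry_one_sq (κ : ℝ) (a : Fin 2) :
    ‖dEntry κ a 1‖ ^ 2 = if a = 0 then 1 else 0 := by
  fin_cases a <;> simp [dEntry]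

lemma norm_krausApply_sq (n : ℕ) (κ : ℝ) (k : Fin n → Fin 2) (v : (Fin n → Fin 2) → ℂ)
    (x : Fin n → Fin 2) :
    ‖krausApply n κ k v x‖ ^ 2 = (∏ m, ‖dEntry κ (k m) (x m)‖ ^ 2) * ‖v x‖ ^ 2 := by
  rw [krausApply, norm_mul, mul_pow, norm_prod, Finset.prod_pow]

lemma card_filter_eq_one_eq_one_iff_eq_single {ι : Type*} [Fintype ι] [DecidableEq ι]
    (x : ι → Fin 2) :
    #{m | x m = 1} = 1 ↔ ∃ i, x = Pi.single i 1 := by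
  constructor
  · intro hx
    obtain ⟨i, hi⟩ := card_eq_one.mp hx
    refine ⟨i, funext fun m => ?_⟩
    have hm : x m = 1 ↔ m = i := by simpa using congrArg (m ∈ ·) hi
    by_cases hmi : m = i
    · subst hmi
      simpa using hm.mpr rfl
    · rw [Pi.single_eq_of_ne hmi]
      have := hm.not.mpr hmi
      omega
  · rintro ⟨i, rfl⟩
    exact card_eq_one.mpr ⟨i, by ext m; by_cases hmi : m = i <;> simp [hmi]⟩

lemma Wstate_single (n : ℕ) (i : Fin n) : Wstate n (Pi.single i 1) = ((1 / √n : ℝ) : ℂ) :=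
  if_pos ((card_filter_eq_one_eq_one_iff_eq_single _).mpr ⟨i, rfl⟩)

lemma Wstate_eq_zero_of_notMem_range {n : ℕ} {x : Fin n → Fin 2}
    (hx : x ∉ Set.range fun i => Pi.single i 1) : Wstate n x = 0 :=
  if_neg fun h => hx ((card_filter_eq_one_eq_one_iff_eq_single x).mp h |>.imp fun _ => Eq.symm)

lemma sum_mul_norm_Wstate_sq (n : ℕ) (f : (Fin n → Fin 2) → ℝ) :
    ∑ x, f x * ‖Wstate n x‖ ^ 2 = (∑ i, f (Pi.single i 1)) / n := by
  rw [sum_div, eq_comm]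
  refine Fintype.sum_of_injective _ (Pi.single_left_injective one_ne_zero) _ _
    (fun x hx => ?_) fun i => ?_
  · simp [Wstate_eq_zero_of_notMem_range hx]
  · simp [Wstate_single, Complex.norm_real, div_eq_mul_inv]

lemma prod_norm_dEntry_single_sq {ι : Type*} [Fintype ι] [DecidableEq ι] {κ : ℝ}
    (hκ : κ ∈ Set.Icc (0 : ℝ) 1) (k : ι → Fin 2) (i : ι) :
    ∏ m, ‖dEntry κ (k m) ((Pi.single i 1 : ι → Fin 2) m)‖ ^ 2 =
      if k i = 0 then κ ^ (Fintype.card ι - #{m | k m = 0}) * (1 - κ) ^ (#{m | k m = 0} - 1)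
      else 0 := by
  rw [← mul_prod_erase univ _ (mem_univ i), Pi.single_eq_same, norm_dEntry_one_sq]
  split_ifs with hki
  · have hrest : ∀ m ∈ univ.erase i, ‖dEntry κ (k m) ((Pi.single i 1 : ι → Fin 2) m)‖ ^ 2 =
        if k m = 0 then 1 - κ else κ := fun m hm => by
      rw [Pi.single_eq_of_ne (ne_of_mem_erase hm), norm_dEntry_zero_sq hκ]
    have hcard := card_filter_add_card_filter_not (s := univ) (p := fun m => k m = 0)
    rw [one_mul, prod_congr rfl hrest, prod_ite, prod_const, prod_const, filter_erase,
      filter_erase, card_erase_of_mem (by simp [hki]), erase_eq_of_notMem (by simp [hki]),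
      mul_comm]
    congr 2
    rw [card_univ] at hcard
    omega
  · simp

lemma card_filter_card_filter_eq_zero_eq_choose {ι : Type*} [Fintype ι] [DecidableEq ι]
    (j : ℕ) :
    #{k : ι → Fin 2 | #{m | k m = 0} = j} = (Fintype.card ι).choose j := by
  rw [← card_univ, ← card_powersetCard]
  refine card_nbij' (fun k => ({m | k m = 0} : Finset ι)) (fun s m => if m ∈ s then 0 else 1)
    (fun k hk => ?_) (fun s hs => ?_) (fun k _ => ?_) (fun s _ => ?_)
  · simp_all
  · simp_all [mem_powersetCard]
  · ext m
    by_cases h : k m = 0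
    · simp [h]
    · simp [Fin.eq_one_of_ne_zero _ h]
  · ext m
    simp

lemma sum_norm_krausApply_Wstate_sq {n : ℕ} {κ : ℝ} (hκ : κ ∈ Set.Icc (0 : ℝ) 1)
    (k : Fin n → Fin 2) :
    ∑ x, ‖krausApply n κ k (Wstate n) x‖ ^ 2 =
      (#{m | k m = 0} / n : ℝ) * κ ^ (n - #{m | k m = 0}) * (1 - κ) ^ (#{m | k m = 0} - 1) := by
  simp_rw [norm_krausApply_sq, sum_mul_norm_Wstate_sq, prod_norm_dEntry_single_sq hκ,
    ← sum_filter, sum_const, nsmul_eq_mul, Fintype.card_fin]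
  ring

theorem aggregated_outcome_probability_general (n : ℕ) (κ : ℝ)
    (hκ : κ ∈ Set.Icc (0:ℝ) 1) (j : ℕ) :
    ∑ k ∈ Finset.univ.filter
        (fun k : Fin n → Fin 2 => (Finset.univ.filter fun m => k m = 0).card = j),
      ∑ x : Fin n → Fin 2, ‖krausApply n κ k (Wstate n) x‖ ^ 2 =
      (n.choose j : ℝ) * ((j : ℝ) / (n : ℝ)) * κ ^ (n - j) * (1 - κ) ^ (j - 1) := by
  rw [sum_congr rfl fun k hk => (mem_filter.mp hk).2 ▸ sum_norm_krausApply_Wstate_sq hκ k,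
    sum_const, card_filter_card_filter_eq_zero_eq_choose, Fintype.card_fin, nsmul_eq_mul]
  ring

/-- Summing the outcome probabilities `‖A_k W_n‖²` over all outcome strings `k`
with exactly `j` zeros yields `℘_{0,j} = C(n,j)·(j/n)·κ^{n-j}·(1-κ)^{j-1}`. -/
theorem aggregated_outcome_probability (n : ℕ) (hn : 1 ≤ n) (κ : ℝ)
    (hκ : κ ∈ Set.Icc (0:ℝ) 1) (j : ℕ) (hj1 : 1 ≤ j) (hjn : j ≤ n) :
    ∑ k ∈ Finset.univ.filter
        (fun k : Fin n → Fin 2 => (Finset.univ.filter fun m => k m = 0).card = j),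
      ∑ x : Fin n → Fin 2, ‖krausApply n κ k (Wstate n) x‖ ^ 2 =
      (n.choose j : ℝ) * ((j : ℝ) / (n : ℝ)) * κ ^ (n - j) * (1 - κ) ^ (j - 1) :=
  aggregated_outcome_probability_general n κ hκ j
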